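/- arXiv:0708.0386 — 9 statements merged into one kernel-verified Lean document; each statement's English description precedes it below -/
import Mathlib

section
/- Let $N \ge 1$ and let $\tilde{n}_0 \le \tilde{n}_1 \le \cdots \le \tilde{n}_N$ be positive integers. Define $p_0 = \tilde{n}_0$, $p_k = \sum_{l=0}^{k} \tilde{n}_l - k\,\tilde{n}_{k+1}$ for $k = 1, \ldots, N-1$, and $p_N = -\infty$. Then for every $i \in \{1, \ldots, \tilde{n}_0\}$ with $p_k \le i \le p_{k-1}$ (for some $k \in \{1,\ldots,N\}$), the minimum $\min_{m=1,\ldots,N} \lfloor (\sum_{l=0}^{m} \tilde{n}_l - i)/m \rfloor$ is attained at $m = k$, i.e. $c_i = 1 - i + \lfloor (\sum_{l=0}^{k} \tilde{n}_l - i)/k \rfloor$. -/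
/-!
Write `S_m = ∑_{l ≤ m} n_l` and `f m = ⌊(S_m - i) / m⌋`. Cross-multiplying,
`(S_m - i)(m + 1) ≤ (S_m + n_{m+1} - i) m` iff `p_m ≤ i`, so `f` steps up from `m` to `m + 1`
when `p_m ≤ i` and steps down when `i ≤ p_m`. As `n` is nondecreasing, `p` is nonincreasing, so
`p_k ≤ i ≤ p_{k-1}` makes `f` nonincreasing on `[1, k]` and nondecreasing on `[k, N]`.
-/

open Finset

lemma Int.fdiv_le_fdiv_of_mul_le_mul {x y a b : ℤ} (ha : 0 < a) (hb : 0 < b)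
    (h : x * b ≤ y * a) : x.fdiv a ≤ y.fdiv b := by
  rw [Int.fdiv_eq_ediv_of_nonneg _ ha.le, Int.fdiv_eq_ediv_of_nonneg _ hb.le,
    Int.le_ediv_iff_mul_le hb]
  have hx : x / a * a ≤ x := Int.ediv_mul_le x ha.ne'
  refine le_of_mul_le_mul_right ?_ ha
  calc x / a * b * a = x / a * a * b := by ring
    _ ≤ x * b := by gcongr
    _ ≤ y * a := h

lemma Finset.inf'_Icc_eq_of_antitoneOn_of_monotoneOn {α : Type*} [LinearOrder α] {f : ℕ → α}
    {a b k : ℕ} (hk : k ∈ Icc a b) (hanti : AntitoneOn f (Set.Icc a k))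
    (hmono : MonotoneOn f (Set.Icc k b)) :
    (Icc a b).inf' ⟨k, hk⟩ f = f k := by
  obtain ⟨hak, hkb⟩ := mem_Icc.1 hk
  refine le_antisymm (inf'_le f hk) (le_inf' _ _ fun m hm => ?_)
  obtain ⟨ham, hmb⟩ := mem_Icc.1 hm
  rcases le_total m k with hmk | hkm
  · exact hanti ⟨ham, hmk⟩ ⟨hak, le_rfl⟩ hmk
  · exact hmono ⟨le_rfl, hkb⟩ ⟨hkm, hmb⟩ hkm

/-- The paper's `p_m`. -/
def breakpoint (n : ℕ → ℤ) (m : ℕ) : ℤ := ∑ l ∈ range (m + 1), n l - m * n (m + 1)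

lemma breakpoint_antitoneOn {N : ℕ} {n : ℕ → ℤ} (hmono : ∀ l, l < N → n l ≤ n (l + 1)) :
    AntitoneOn (breakpoint n) (Set.Iic (N - 1)) := by
  refine antitoneOn_of_succ_le Set.ordConnected_Iic fun m _ _ hm => ?_
  rw [Order.succ_eq_add_one, Set.mem_Iic] at hm
  have hn : (m + 1 : ℤ) * n (m + 1) ≤ (m + 1) * n (m + 2) :=
    mul_le_mul_of_nonneg_left (hmono (m + 1) (by omega)) (by positivity)
  simp only [Order.succ_eq_add_one, breakpoint, sum_range_succ _ (m + 1)]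
  push_cast
  linarith

lemma fdiv_sum_range_le_succ {n : ℕ → ℤ} {i : ℤ} {m : ℕ} (hm : 0 < m)
    (h : breakpoint n m ≤ i) :
    (∑ l ∈ range (m + 1), n l - i).fdiv m ≤ (∑ l ∈ range (m + 2), n l - i).fdiv (m + 1 : ℕ) := by
  refine Int.fdiv_le_fdiv_of_mul_le_mul (by exact_mod_cast hm) (by positivity) ?_
  rw [breakpoint] at h
  rw [sum_range_succ _ (m + 1)]
  push_cast
  linarith

lemma fdiv_sum_range_succ_le {n : ℕ → ℤ} {i : ℤ} {m : ℕ} (hm : 0 < m)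
    (h : i ≤ breakpoint n m) :
    (∑ l ∈ range (m + 2), n l - i).fdiv (m + 1 : ℕ) ≤ (∑ l ∈ range (m + 1), n l - i).fdiv m := by
  refine Int.fdiv_le_fdiv_of_mul_le_mul (by positivity) (by exact_mod_cast hm) ?_
  rw [breakpoint] at h
  rw [sum_range_succ _ (m + 1)]
  push_cast
  linarith

theorem rp_coeff_attained_general (N : ℕ) (hN : 1 ≤ N) (n : ℕ → ℤ)
    (hmono : ∀ l, l < N → n l ≤ n (l + 1))
    (p : ℕ → ℤ)
    (hpk : ∀ k, 1 ≤ k → k ≤ N - 1 →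
      p k = (∑ l ∈ Finset.range (k + 1), n l) - (k : ℤ) * n (k + 1))
    (k : ℕ) (hk1 : 1 ≤ k) (hkN : k ≤ N)
    (i : ℤ)
    (hlow : k < N → p k ≤ i) (hhigh : i ≤ p (k - 1)) :
    (Finset.Icc 1 N).inf' (Finset.nonempty_Icc.mpr hN)
        (fun m => Int.fdiv ((∑ l ∈ Finset.range (m + 1), n l) - i) (m : ℤ))
      = Int.fdiv ((∑ l ∈ Finset.range (k + 1), n l) - i) (k : ℤ) := by
  have hbp : AntitoneOn (breakpoint n) (Set.Iic (N - 1)) := breakpoint_antitoneOn hmono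
  refine inf'_Icc_eq_of_antitoneOn_of_monotoneOn (mem_Icc.2 ⟨hk1, hkN⟩) ?_ ?_
  · refine antitoneOn_of_succ_le Set.ordConnected_Icc fun m _ hm hm' => ?_
    simp only [Set.mem_Icc, Order.succ_eq_add_one] at hm hm'
    refine fdiv_sum_range_succ_le (by omega) ?_
    calc i ≤ p (k - 1) := hhigh
      _ = breakpoint n (k - 1) := hpk (k - 1) (by omega) (by omega)
      _ ≤ breakpoint n m := hbp (Set.mem_Iic.2 (by omega)) (Set.mem_Iic.2 (by omega)) (by omega)
  · refine monotoneOn_of_le_succ Set.ordConnected_Icc fun m _ hm hm' => ?_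
    simp only [Set.mem_Icc, Order.succ_eq_add_one] at hm hm'
    refine fdiv_sum_range_le_succ (by omega) ?_
    calc breakpoint n m ≤ breakpoint n k :=
          hbp (Set.mem_Iic.2 (by omega)) (Set.mem_Iic.2 (by omega)) hm.1
      _ = p k := (hpk k hk1 (by omega)).symm
      _ ≤ i := hlow (by omega)

/-- On the interval `p_k ≤ i ≤ p_{k-1}` (with `p_N = -∞`, encoded by the
implication `k < N → p k ≤ i`), the minimum defining the DMT coefficient `c i` of a
Rayleigh product channel is attained at `m = k`. -/
theorem rp_coeff_attained (N : ℕ) (hN : 1 ≤ N) (n : ℕ → ℤ)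
    (hpos : ∀ l, l ≤ N → 0 < n l)
    (hmono : ∀ l, l < N → n l ≤ n (l + 1))
    (p : ℕ → ℤ)
    (hp0 : p 0 = n 0)
    (hpk : ∀ k, 1 ≤ k → k ≤ N - 1 →
      p k = (∑ l ∈ Finset.range (k + 1), n l) - (k : ℤ) * n (k + 1))
    (k : ℕ) (hk1 : 1 ≤ k) (hkN : k ≤ N)
    (i : ℤ) (hi1 : 1 ≤ i) (hi0 : i ≤ n 0)
    (hlow : k < N → p k ≤ i) (hhigh : i ≤ p (k - 1)) :
    (Finset.Icc 1 N).inf' (Finset.nonempty_Icc.mpr hN)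
        (fun m => Int.fdiv ((∑ l ∈ Finset.range (m + 1), n l) - i) (m : ℤ))
      = Int.fdiv ((∑ l ∈ Finset.range (k + 1), n l) - i) (k : ℤ) :=
  rp_coeff_attained_general N hN n hmono p hpk k hk1 hkN i hlow hhigh
end

section
/- Let $\tilde{n}_0 \le \tilde{n}_1 \le \tilde{n}_2 \le \cdots \le \tilde{n}_N$ be positive integers with $N \ge 2$. Then $c_i^{(N)} = c_i^{(1)}$ for all $i \in \{1,\ldots,\tilde{n}_0\}$ (where $c_i^{(m)} = 1 - i + \min_{j \le m} \lfloor (\sum_{l=0}^{j} \tilde{n}_l - i)/j \rfloor$) if and only if $\tilde{n}_2 + 1 \ge \tilde{n}_0 + \tilde{n}_1$. -/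
/-! For `j ≥ 2` the `j`-th quotient is `⌊(ñ₀ + ñ₁ - i + ∑_{l=2}^{j} ñ_l) / j⌋`. If
`ñ₂ ≥ ñ₀ + ñ₁ - 1`, monotonicity makes every added `ñ_l` at least `ñ₀ + ñ₁ - i`, so the `j = 1`
quotient `ñ₀ + ñ₁ - i` is the minimum. Conversely, at `i = 1` the `j = 2` quotient
`⌊(ñ₀ + ñ₁ + ñ₂ - 1) / 2⌋` must be at least `ñ₀ + ñ₁ - 1`, which is the inequality. -/

open Finset

/-- `c_i^{(m)} = 1 - i + min_{1 ≤ j ≤ m} dmtQuot n i j`. -/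
def dmtQuot (n : ℕ → ℤ) (i : ℤ) (j : ℕ) : ℤ :=
  Int.fdiv ((∑ l ∈ range (j + 1), n l) - i) j

lemma dmtQuot_one (n : ℕ → ℤ) (i : ℤ) : dmtQuot n i 1 = n 0 + n 1 - i := by
  simp [dmtQuot, sum_range_succ]

lemma dmtQuot_two (n : ℕ → ℤ) (i : ℤ) : dmtQuot n i 2 = (n 0 + n 1 + n 2 - i) / 2 := by
  simp [dmtQuot, sum_range_succ, Int.fdiv_eq_ediv_of_nonneg]

lemma monotoneOn_Iic_of_le_succ {α : Type*} [Preorder α] {f : ℕ → α} {N : ℕ}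
    (hf : ∀ l, l < N → f l ≤ f (l + 1)) : MonotoneOn f (Set.Iic N) :=
  monotoneOn_of_le_succ Set.ordConnected_Iic fun a _ _ ha => by
    rw [Order.succ_eq_add_one] at ha ⊢
    exact hf a ha

lemma mul_le_sum_range_sub {n : ℕ → ℤ} {i : ℤ} {j : ℕ} (hj : 1 ≤ j)
    (hn : ∀ l, 2 ≤ l → l ≤ j → n 0 + n 1 - i ≤ n l) :
    j * (n 0 + n 1 - i) ≤ (∑ l ∈ range (j + 1), n l) - i := by
  induction j, hj using Nat.le_induction with
  | base => simp [sum_range_succ]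
  | succ j hj ih =>
    have hprev := ih fun l hl hlj => hn l hl (by omega)
    have hlast := hn (j + 1) (by omega) le_rfl
    rw [sum_range_succ]; push_cast; linarith

lemma le_dmtQuot {n : ℕ → ℤ} {i : ℤ} {j : ℕ} (hj : 1 ≤ j)
    (hn : ∀ l, 2 ≤ l → l ≤ j → n 0 + n 1 - i ≤ n l) : n 0 + n 1 - i ≤ dmtQuot n i j := by
  have hj' : (0 : ℤ) < j := by exact_mod_cast hj
  rw [dmtQuot, Int.fdiv_eq_ediv_of_nonneg _ hj'.le, Int.le_ediv_iff_mul_le hj', mul_comm]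
  exact mul_le_sum_range_sub hj hn

/-- A Rayleigh product channel reduces to an ordinary `ñ₀ × ñ₁` Rayleigh
channel (`c^(N) = c^(1)` on `1 ≤ i ≤ ñ₀`) if and only if `ñ₂ + 1 ≥ ñ₀ + ñ₁`. -/
theorem rp_reduction_to_rayleigh (N : ℕ) (hN : 2 ≤ N) (n : ℕ → ℤ)
    (hpos : ∀ l, l ≤ N → 0 < n l)
    (hmono : ∀ l, l < N → n l ≤ n (l + 1)) :
    (∀ i : ℤ, 1 ≤ i → i ≤ n 0 →
        (1 - i + (Finset.Icc 1 N).inf' (Finset.nonempty_Icc.mpr (by omega))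
            (fun j => Int.fdiv ((∑ l ∈ Finset.range (j + 1), n l) - i) (j : ℤ)))
          = (1 - i + (Finset.Icc 1 1).inf' (Finset.nonempty_Icc.mpr le_rfl)
            (fun j => Int.fdiv ((∑ l ∈ Finset.range (j + 1), n l) - i) (j : ℤ))))
      ↔ n 2 + 1 ≥ n 0 + n 1 := by
  change (∀ i : ℤ, 1 ≤ i → i ≤ n 0 → 1 - i + (Icc 1 N).inf' _ (dmtQuot n i) =
    1 - i + (Icc 1 1).inf' _ (dmtQuot n i)) ↔ _
  simp only [Icc_self, inf'_singleton, dmtQuot_one, add_right_inj]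
  constructor
  · intro H
    have h2 := (H 1 le_rfl (hpos 0 (by omega))).ge.trans (inf'_le _ (mem_Icc.mpr ⟨by omega, hN⟩))
    rw [dmtQuot_two] at h2
    omega
  · intro h i _ _
    refine le_antisymm ((inf'_le _ (mem_Icc.mpr ⟨le_rfl, by omega⟩)).trans_eq (dmtQuot_one n i)) (le_inf' _ _ fun j hj => ?_)
    obtain ⟨hj1, hjN⟩ := mem_Icc.mp hj
    refine le_dmtQuot hj1 fun l hl hlj => ?_
    have h2l : n 2 ≤ n l := monotoneOn_Iic_of_le_succ hmono (Set.mem_Iic.mpr hN)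
      (Set.mem_Iic.mpr (hlj.trans hjN)) hl
    omega
end

section
/- For the symmetric case $n_0 = n_1 = \cdots = n_N = n$, the coefficients $c_i = 1 - i + \min_{k=1,\ldots,N} \lfloor ((k+1)n - i)/k \rfloor$ satisfy: the diversity at integer multiplexing gain $k$, defined as $d(k) = \sum_{i=k+1}^{n} c_i$, equals $\frac{(n-k)(n+1-k)}{2} + \frac{a(k)}{2}\big((a(k)-1)N + 2 b(k)\big)$, where $a(k) = \lfloor (n-k)/N \rfloor$ and $b(k) = (n-k) \bmod N$. -/
/-!
Put `i = n - j`. Every quotient in the minimum is `n + ⌊j / m⌋`, which is smallest at `m = N`, so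
`c (n - j) = j + 1 + ⌊j / N⌋`. Summing over `j < n - k`, the terms `j + 1` give `(n-k)(n-k+1)/2`,
and writing `n - k = a N + b`, the floors contribute `N (0 + 1 + ⋯ + (a - 1))` from the `a` full
blocks of length `N` and `a b` from the last, partial block.
-/

open Finset

theorem Finset.sum_range_id_mul_two_add (n : ℕ) : (∑ i ∈ range n, i) * 2 + n = n * n := by
  have h := sum_range_id_mul_two (n + 1)
  rw [sum_range_succ, add_tsub_cancel_right] at h
  linarith

theorem Finset.sum_range_mul_add_div {N r : ℕ} (hr : r ≤ N) (q : ℕ) :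
    ∑ x ∈ range r, (N * q + x) / N = r * q := by
  rw [sum_const_nat fun x hx => ?_, card_range]
  have hxN : x < N := (mem_range.mp hx).trans_le hr
  rw [Nat.mul_add_div (by omega), Nat.div_eq_of_lt hxN, add_zero]

theorem Finset.sum_range_mul_div (N q : ℕ) :
    ∑ j ∈ range (N * q), j / N = N * ∑ t ∈ range q, t := by
  induction q with
  | zero => simp
  | succ q ih =>
    rw [Nat.mul_succ, sum_range_add, ih, sum_range_mul_add_div le_rfl, sum_range_succ]
    ring

theorem Finset.sum_range_div {N : ℕ} (hN : 0 < N) (m : ℕ) :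
    ∑ j ∈ range m, j / N = N * ∑ t ∈ range (m / N), t + m % N * (m / N) := by
  conv_lhs => rw [← Nat.div_add_mod m N]
  rw [sum_range_add, sum_range_mul_div, sum_range_mul_add_div (Nat.mod_lt m hN).le]

theorem Finset.cast_sum_range_add_one_add_div {N : ℕ} (hN : 0 < N) (m : ℕ) :
    ((∑ j ∈ range m, (j + 1 + j / N) : ℕ) : ℚ) =
      m * (m + 1) / 2 + (m / N : ℕ) / 2 * (((m / N : ℕ) - 1) * N + 2 * (m % N : ℕ)) := by
  have hS := congrArg (Nat.cast (R := ℚ)) (sum_range_id_mul_two_add m)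
  have hU := congrArg (Nat.cast (R := ℚ)) (sum_range_id_mul_two_add (m / N))
  rw [sum_add_distrib, sum_add_distrib, sum_range_div hN, sum_const, card_range, smul_eq_mul,
    mul_one]
  push_cast at hS hU ⊢
  linear_combination (1 / 2 : ℚ) * hS + (N / 2 : ℚ) * hU

theorem Int.fdiv_succ_mul_sub_sub (n j : ℕ) {m : ℕ} (hm : m ≠ 0) :
    Int.fdiv (((m : ℤ) + 1) * n - (n - j)) m = n + (j / m : ℕ) := by
  rw [show ((m : ℤ) + 1) * n - (n - j) = j + n * m by ring,
    Int.add_mul_fdiv_right _ _ (by exact_mod_cast hm), ← Int.ofNat_fdiv, add_comm]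

theorem inf'_Icc_fdiv_succ_mul_sub_sub {N : ℕ} (hN : 1 ≤ N) (n j : ℕ) :
    (Icc 1 N).inf' (nonempty_Icc.mpr hN) (fun m => Int.fdiv (((m : ℤ) + 1) * n - (n - j)) m) =
      n + (j / N : ℕ) := by
  refine le_antisymm ?_ (le_inf' _ _ fun m hm => ?_)
  · exact (inf'_le _ (right_mem_Icc.mpr hN)).trans_eq (Int.fdiv_succ_mul_sub_sub n j (by omega))
  · obtain ⟨hm1, hmN⟩ := mem_Icc.mp hm
    rw [Int.fdiv_succ_mul_sub_sub n j (by omega)]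
    gcongr

theorem Finset.sum_Icc_int_eq_sum_range {M : Type*} [AddCommMonoid M] (f : ℤ → M) {k n : ℕ}
    (hk : k ≤ n) : ∑ i ∈ Icc (k + 1 : ℤ) n, f i = ∑ j ∈ range (n - k), f (n - j) := by
  refine sum_nbij' (fun i => (n - i).toNat) (fun j => n - j) ?_ ?_ ?_ ?_
    fun i hi => congrArg f (by rw [mem_Icc] at hi; omega) <;>
  · intro x hx
    simp only [mem_Icc, mem_range] at hx ⊢
    omega

theorem rp_symmetric_dmt_general (N n : ℕ) (hN : 1 ≤ N)
    (k : ℕ) (hk : k ≤ n)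
    (c : ℤ → ℤ)
    (hc : ∀ i : ℤ, c i = 1 - i +
      (Finset.Icc 1 N).inf' (Finset.nonempty_Icc.mpr hN)
        (fun m => Int.fdiv (((m : ℤ) + 1) * n - i) (m : ℤ)))
    (a b : ℤ)
    (ha : a = Int.fdiv ((n : ℤ) - k) (N : ℤ))
    (hb : b = ((n : ℤ) - k) % (N : ℤ)) :
    ((∑ i ∈ Finset.Icc (k + 1 : ℤ) (n : ℤ), c i : ℤ) : ℚ)
      = ((n : ℚ) - k) * ((n : ℚ) + 1 - k) / 2
        + (a : ℚ) / 2 * (((a : ℚ) - 1) * N + 2 * (b : ℚ)) := by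
  have hc_sub (j : ℕ) : c (n - j) = ((j + 1 + j / N : ℕ) : ℤ) := by
    rw [hc, inf'_Icc_fdiv_succ_mul_sub_sub hN]
    push_cast
    ring
  have hnk : ((n - k : ℕ) : ℤ) = n - k := by omega
  rw [sum_Icc_int_eq_sum_range c hk, sum_congr rfl fun j _ => hc_sub j, ← Nat.cast_sum,
    ha, hb, ← hnk, ← Int.ofNat_fdiv, ← Int.natCast_mod]
  simp only [Int.cast_natCast]
  rw [cast_sum_range_add_one_add_div hN]
  push_cast [hk]
  ring

/-- Closed-form DMT of the symmetric `(n, …, n)` Rayleigh product channel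
of length `N` at integer multiplexing gain `k`:
`∑_{i=k+1}^n c_i = (n-k)(n+1-k)/2 + (a/2)((a-1)N + 2b)`, where
`a = ⌊(n-k)/N⌋` and `b = (n-k) mod N`. -/
theorem rp_symmetric_dmt (N n : ℕ) (hN : 1 ≤ N) (hn : 1 ≤ n)
    (k : ℕ) (hk : k ≤ n)
    (c : ℤ → ℤ)
    (hc : ∀ i : ℤ, c i = 1 - i +
      (Finset.Icc 1 N).inf' (Finset.nonempty_Icc.mpr hN)
        (fun m => Int.fdiv (((m : ℤ) + 1) * n - i) (m : ℤ)))
    (a b : ℤ)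
    (ha : a = Int.fdiv ((n : ℤ) - k) (N : ℤ))
    (hb : b = ((n : ℤ) - k) % (N : ℤ)) :
    ((∑ i ∈ Finset.Icc (k + 1 : ℤ) (n : ℤ), c i : ℤ) : ℚ)
      = ((n : ℚ) - k) * ((n : ℚ) + 1 - k) / 2
        + (a : ℚ) / 2 * (((a : ℚ) - 1) * N + 2 * (b : ℚ)) :=
  rp_symmetric_dmt_general N n hN k hk c hc a b ha hb
end

section
/- For the symmetric Rayleigh product channel with $n_0 = \cdots = n_N = n$ and $N \ge n$, the diversity at integer multiplexing gain $k$ equals $\frac{(n-k)(n+1-k)}{2}$, i.e. $\sum_{i=k+1}^{n} c_i = \frac{(n-k)(n+1-k)}{2}$ where $c_i = 1 - i + \min_{m=1,\ldots,N} \lfloor ((m+1)n - i)/m \rfloor$. -/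
/-!
Since `((m + 1) n - i) / m = n + (n - i) / m`, every term of the minimum is at least `n` when
`i ≤ n`, and the term `m = N ≥ n > n - i` equals `n`. Hence `c i = n + 1 - i` for `k < i ≤ n`,
and the sum is the triangular number `1 + 2 + ⋯ + (n - k)`.
-/

lemma sum_Icc_sub_mul_two {a b : ℤ} (h : a ≤ b + 1) :
    (∑ i ∈ Finset.Icc a b, (b + 1 - i)) * 2 = (b + 1 - a) * (b + 2 - a) := by
  induction a, h using Int.leInductionDown with
  | base => simp
  | pred a hab ih =>
    have hIcc : Finset.Icc (a - 1) b = insert (a - 1) (Finset.Icc a b) := by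
      rw [← Finset.insert_Icc_add_one_left_eq_Icc (by omega), sub_add_cancel]
    rw [hIcc, Finset.sum_insert (by simp), add_mul, ih]
    ring

lemma Int.fdiv_succ_mul_sub {m : ℤ} (hm : 0 < m) (n i : ℤ) :
    ((m + 1) * n - i).fdiv m = n + (n - i) / m := by
  rw [Int.fdiv_eq_ediv_of_nonneg _ hm.le, show (m + 1) * n - i = n - i + n * m by ring,
    Int.add_mul_ediv_right _ _ hm.ne', add_comm]

lemma inf'_fdiv_succ_mul_sub {N : ℕ} (h : (Finset.Icc 1 N).Nonempty) {n i : ℤ} (hi : i ≤ n)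
    (hN : n - i < N) :
    (Finset.Icc 1 N).inf' h (fun m => Int.fdiv (((m : ℤ) + 1) * n - i) (m : ℤ)) = n := by
  have hpos : ∀ m ∈ Finset.Icc 1 N, (0 : ℤ) < m := fun m hm => by
    have := (Finset.mem_Icc.mp hm).1; omega
  apply le_antisymm
  · have hNmem : N ∈ Finset.Icc 1 N := Finset.right_mem_Icc.mpr (by simpa using h)
    refine (Finset.inf'_le _ hNmem).trans_eq ?_
    simp only [Int.fdiv_succ_mul_sub (hpos N hNmem), Int.ediv_eq_zero_of_lt (by omega) hN,
      add_zero]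
  · refine Finset.le_inf' _ _ fun m hm => ?_
    simp only [Int.fdiv_succ_mul_sub (hpos m hm)]
    have := Int.ediv_nonneg (sub_nonneg.mpr hi) (hpos m hm).le
    omega

/-- For the symmetric `(n, …, n)` Rayleigh product channel with `N ≥ n`
hops, the diversity at integer multiplexing gain `k` equals `(n-k)(n+1-k)/2`. -/
theorem rp_symmetric_dmt_long (N n : ℕ) (hn : 1 ≤ n) (hNn : n ≤ N)
    (k : ℕ) (hk : k ≤ n)
    (c : ℤ → ℤ)
    (hc : ∀ i : ℤ, c i = 1 - i +
      (Finset.Icc 1 N).inf' (Finset.nonempty_Icc.mpr (hn.trans hNn))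
        (fun m => Int.fdiv (((m : ℤ) + 1) * n - i) (m : ℤ))) :
    ((∑ i ∈ Finset.Icc (k + 1 : ℤ) (n : ℤ), c i : ℤ) : ℚ)
      = ((n : ℚ) - k) * ((n : ℚ) + 1 - k) / 2 := by
  have hc_eq : ∀ i ∈ Finset.Icc (k + 1 : ℤ) n, c i = n + 1 - i := fun i hi => by
    obtain ⟨hki, hin⟩ := Finset.mem_Icc.mp hi
    rw [hc, inf'_fdiv_succ_mul_sub _ hin (by omega)]
    ring
  have hsum := congrArg (Int.cast : ℤ → ℚ)
    (sum_Icc_sub_mul_two (a := (k + 1 : ℤ)) (b := n) (by omega))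
  rw [Finset.sum_congr rfl hc_eq]
  push_cast at hsum ⊢
  linarith
end

section
/- Let $\vec{n}_1$ and $\vec{n}_2$ be dimension vectors of the same length $N+1$ with ordered versions satisfying $\tilde{n}_{1,i} \ge \tilde{n}_{2,i}$ for all $i = 0, \ldots, N$ (componentwise domination of ordered versions). Then for every $i \in \{1, \ldots, \min_j \tilde{n}_{2,j}\}$, the coefficient $c_i(\vec{n}_1) \ge c_i(\vec{n}_2)$, where $c_i(\vec{n}) = 1 - i + \min_{k=1,\ldots,N} \lfloor (\sum_{l=0}^{k} \tilde{n}_l - i)/k \rfloor$. Consequently the diversity values satisfy $\sum_{i=k+1}^{n_{\min,2}} c_i(\vec{n}_1) \ge \sum_{i=k+1}^{n_{\min,2}} c_i(\vec{n}_2)$ for every integer $k$. -/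
/-! Each coefficient is `1 - i` plus a minimum over `k` of `⌊(n₀ + ⋯ + n_k - i) / k⌋`; every term of
that minimum is monotone in the partial sums, hence in the dimension vector, and summing the
pointwise inequality over `i` gives the inequality of diversity values. -/

theorem Int.fdiv_le_fdiv_of_le {a b c : ℤ} (hab : a ≤ b) (hc : 0 ≤ c) :
    a.fdiv c ≤ b.fdiv c := by
  rw [Int.fdiv_eq_ediv_of_nonneg _ hc, Int.fdiv_eq_ediv_of_nonneg _ hc]
  rcases hc.eq_or_lt with rfl | hc
  · simp
  · exact Int.ediv_le_ediv hc hab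

/-- The coefficient `c_i` of a Rayleigh product channel whose ordered dimension vector is
`n 0 ≤ n 1 ≤ ⋯ ≤ n N`. -/
def rpDmtCoeff (N : ℕ) (hN : 1 ≤ N) (n : ℕ → ℤ) (i : ℤ) : ℤ :=
  1 - i + (Finset.Icc 1 N).inf' (Finset.nonempty_Icc.mpr hN)
    (fun k => Int.fdiv ((∑ l ∈ Finset.range (k + 1), n l) - i) (k : ℤ))

theorem rpDmtCoeff_mono {N : ℕ} (hN : 1 ≤ N) {n₁ n₂ : ℕ → ℤ}
    (hdom : ∀ l, l ≤ N → n₂ l ≤ n₁ l) (i : ℤ) :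
    rpDmtCoeff N hN n₂ i ≤ rpDmtCoeff N hN n₁ i := by
  refine add_le_add_right (Finset.inf'_mono_fun fun k hk => ?_) _
  have hkN : k ≤ N := (Finset.mem_Icc.mp hk).2
  have hsum : ∑ l ∈ Finset.range (k + 1), n₂ l ≤ ∑ l ∈ Finset.range (k + 1), n₁ l :=
    Finset.sum_le_sum fun l hl => hdom l (by rw [Finset.mem_range] at hl; omega)
  exact Int.fdiv_le_fdiv_of_le (by linarith) (Int.natCast_nonneg k)

theorem rp_dmt_monotone_general (N : ℕ) (hN : 1 ≤ N) (n₁ n₂ : ℕ → ℤ)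
    (hdom : ∀ l, l ≤ N → n₂ l ≤ n₁ l)
    (c₁ c₂ : ℤ → ℤ)
    (hc₁ : ∀ i : ℤ, c₁ i = 1 - i +
      (Finset.Icc 1 N).inf' (Finset.nonempty_Icc.mpr hN)
        (fun k => Int.fdiv ((∑ l ∈ Finset.range (k + 1), n₁ l) - i) (k : ℤ)))
    (hc₂ : ∀ i : ℤ, c₂ i = 1 - i +
      (Finset.Icc 1 N).inf' (Finset.nonempty_Icc.mpr hN)
        (fun k => Int.fdiv ((∑ l ∈ Finset.range (k + 1), n₂ l) - i) (k : ℤ))) :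
    (∀ i : ℤ, 1 ≤ i → i ≤ n₂ 0 → c₂ i ≤ c₁ i)
    ∧ ∀ k : ℤ, (∑ i ∈ Finset.Icc (k + 1) (n₂ 0), c₂ i)
        ≤ ∑ i ∈ Finset.Icc (k + 1) (n₂ 0), c₁ i := by
  obtain rfl : c₁ = rpDmtCoeff N hN n₁ := funext hc₁
  obtain rfl : c₂ = rpDmtCoeff N hN n₂ := funext hc₂
  have hcoeff := rpDmtCoeff_mono hN hdom
  exact ⟨fun i _ _ => hcoeff i, fun k => Finset.sum_le_sum fun i _ => hcoeff i⟩

/-- Monotonicity of the Rayleigh product channel DMT: if the ordered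
dimension vector `n₁` dominates `n₂` componentwise, then the coefficients satisfy
`c_i(n₁) ≥ c_i(n₂)` for `1 ≤ i ≤ min n₂`, and hence the diversity values
`∑_{i=k+1}^{n_{min,2}} c_i` are ordered accordingly for every integer `k`. -/
theorem rp_dmt_monotone (N : ℕ) (hN : 1 ≤ N) (n₁ n₂ : ℕ → ℤ)
    (hpos₁ : ∀ l, l ≤ N → 0 < n₁ l) (hmono₁ : ∀ l, l < N → n₁ l ≤ n₁ (l + 1))
    (hpos₂ : ∀ l, l ≤ N → 0 < n₂ l) (hmono₂ : ∀ l, l < N → n₂ l ≤ n₂ (l + 1))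
    (hdom : ∀ l, l ≤ N → n₂ l ≤ n₁ l)
    (c₁ c₂ : ℤ → ℤ)
    (hc₁ : ∀ i : ℤ, c₁ i = 1 - i +
      (Finset.Icc 1 N).inf' (Finset.nonempty_Icc.mpr hN)
        (fun k => Int.fdiv ((∑ l ∈ Finset.range (k + 1), n₁ l) - i) (k : ℤ)))
    (hc₂ : ∀ i : ℤ, c₂ i = 1 - i +
      (Finset.Icc 1 N).inf' (Finset.nonempty_Icc.mpr hN)
        (fun k => Int.fdiv ((∑ l ∈ Finset.range (k + 1), n₂ l) - i) (k : ℤ))) :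
    (∀ i : ℤ, 1 ≤ i → i ≤ n₂ 0 → c₂ i ≤ c₁ i)
    ∧ ∀ k : ℤ, (∑ i ∈ Finset.Icc (k + 1) (n₂ 0), c₂ i)
        ≤ ∑ i ∈ Finset.Icc (k + 1) (n₂ 0), c₁ i :=
  rp_dmt_monotone_general N hN n₁ n₂ hdom c₁ c₂ hc₁ hc₂
end

section
/- Let $(n_0, n_1, \ldots, n_N)$ be positive integers with ordered version $\tilde{n}_0 \le \cdots \le \tilde{n}_N$. Then $\sum_{i=1}^{\tilde{n}_0} c_i \le \tilde{n}_0 \tilde{n}_1$, where $c_i = 1 - i + \min_{k=1,\ldots,N} \lfloor (\sum_{l=0}^{k} \tilde{n}_l - i)/k \rfloor$. -/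
lemma gauss_icc (a : ℤ) : ∀ m : ℕ, (∑ i ∈ Finset.Icc (1:ℤ) (m:ℤ), (a + 1 - 2*i)) = m * (a - m) := by
  intro m
  induction m with
  | zero => simp
  | succ k ih =>
      have hins : Finset.Icc (1:ℤ) ((k:ℤ)+1) = insert ((k:ℤ)+1) (Finset.Icc 1 (k:ℤ)) := by
        ext x; simp only [Finset.mem_Icc, Finset.mem_insert]; omega
      push_cast
      rw [hins, Finset.sum_insert (by simp), ih]
      ring

/-- Upper bound on the maximum diversity of the AF scheme:
`∑_{i=1}^{ñ₀} c_i ≤ ñ₀ ñ₁` (the virtual bottleneck). -/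
theorem af_max_diversity_upper (N : ℕ) (hN : 1 ≤ N) (n : ℕ → ℤ)
    (hpos : ∀ l, l ≤ N → 0 < n l)
    (hmono : ∀ l, l < N → n l ≤ n (l + 1))
    (c : ℤ → ℤ)
    (hc : ∀ i : ℤ, c i = 1 - i +
      (Finset.Icc 1 N).inf' (Finset.nonempty_Icc.mpr hN)
        (fun k => Int.fdiv ((∑ l ∈ Finset.range (k + 1), n l) - i) (k : ℤ))) :
    (∑ i ∈ Finset.Icc (1 : ℤ) (n 0), c i) ≤ n 0 * n 1 := by
  have key : ∀ i ∈ Finset.Icc (1:ℤ) (n 0), c i ≤ (n 0 + n 1) + 1 - 2*i := by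
    intro i _
    rw [hc]
    have h1 : (1:ℕ) ∈ Finset.Icc 1 N := Finset.mem_Icc.mpr ⟨le_refl 1, hN⟩
    have hle := Finset.inf'_le (f := fun k => Int.fdiv ((∑ l ∈ Finset.range (k + 1), n l) - i) (k : ℤ)) h1
    have h2 : Int.fdiv ((∑ l ∈ Finset.range (1 + 1), n l) - i) ((1:ℕ) : ℤ)
        = n 0 + n 1 - i := by
      rw [Finset.sum_range_succ, Finset.sum_range_one]
      norm_num
    rw [h2] at hle
    linarith
  calc (∑ i ∈ Finset.Icc (1 : ℤ) (n 0), c i)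
      ≤ ∑ i ∈ Finset.Icc (1:ℤ) (n 0), ((n 0 + n 1) + 1 - 2*i) := Finset.sum_le_sum key
    _ = n 0 * n 1 := by
        have h0 : 0 < n 0 := hpos 0 (by omega)
        have hcast : ((n 0).toNat : ℤ) = n 0 := Int.toNat_of_nonneg h0.le
        rw [← hcast, gauss_icc, hcast]; ring
end

section
/- Let $n_0 \ge n_2 \ge 1$ and $n_1 \ge 1$ be integers. Suppose positive integers $K_1, K_2$ and, for $k = 1, \ldots, K_1 K_2$, nonnegative integers $n_{k,0}, n_{k,1}, n_{k,2}$ satisfy: (i) $n_{k,0} + 1 \ge n_{k,1} + n_{k,2}$ for all $k$; (ii) $\sum_{k} n_{k,0} \le K_1 n_0$; (iii) summed over all $k$, $\sum_k n_{k,1} = K_2 n_1$ and $\sum_k n_{k,2} = K_1 n_2$. Then $K_1 K_2 \ge \lceil n_1 / (n_0 - n_2 + 1) \rceil$. Moreover this bound is achieved: there exists such a configuration with $K_2 = 1$ and $K_1 = \lceil n_1 / (n_0 - n_2 + 1) \rceil$. -/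
/-- For the two-hop `(n₀, n₁, n₂)` channel with `n₀ ≥ n₂ ≥ 1`, any
full-diversity independent parallel partition (encoded by path antenna counts
`A k, B k, C k` satisfying conditions (i)–(iii)) has size
`K₁K₂ ≥ ⌈n₁/(n₀ - n₂ + 1)⌉`, and this bound is achieved with `K₂ = 1`. -/
theorem two_hop_partition_size (n0 n1 n2 : ℤ)
    (h02 : n2 ≤ n0) (h2 : 1 ≤ n2) (h1 : 1 ≤ n1)
    (K1 K2 : ℕ) (hK1 : 1 ≤ K1) (hK2 : 1 ≤ K2)
    (A B C : ℕ → ℤ)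
    (hnn : ∀ k, k < K1 * K2 → 0 ≤ A k ∧ 0 ≤ B k ∧ 0 ≤ C k)
    (hi : ∀ k, k < K1 * K2 → B k + C k ≤ A k + 1)
    (hii : ∑ k ∈ Finset.range (K1 * K2), A k ≤ (K1 : ℤ) * n0)
    (hiii₁ : ∑ k ∈ Finset.range (K1 * K2), B k = (K2 : ℤ) * n1)
    (hiii₂ : ∑ k ∈ Finset.range (K1 * K2), C k = (K1 : ℤ) * n2) :
    ⌈(n1 : ℚ) / ((n0 : ℚ) - n2 + 1)⌉ ≤ ((K1 * K2 : ℕ) : ℤ)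
    ∧ ∃ (K1' : ℕ) (A' B' C' : ℕ → ℤ),
        (K1' : ℤ) = ⌈(n1 : ℚ) / ((n0 : ℚ) - n2 + 1)⌉ ∧
        (∀ k, k < K1' * 1 → 0 ≤ A' k ∧ 0 ≤ B' k ∧ 0 ≤ C' k) ∧
        (∀ k, k < K1' * 1 → B' k + C' k ≤ A' k + 1) ∧
        (∑ k ∈ Finset.range (K1' * 1), A' k ≤ (K1' : ℤ) * n0) ∧
        (∑ k ∈ Finset.range (K1' * 1), B' k = (1 : ℤ) * n1) ∧
        (∑ k ∈ Finset.range (K1' * 1), C' k = (K1' : ℤ) * n2) := by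
  set d : ℤ := n0 - n2 + 1 with hd
  have hdpos : (0:ℤ) < d := by omega
  have hdq : (0:ℚ) < (n0:ℚ) - n2 + 1 := by
    have : ((d:ℤ) : ℚ) = (n0:ℚ) - n2 + 1 := by push_cast [hd]; ring
    rw [← this]; exact_mod_cast hdpos
  set q : ℤ := ⌈(n1 : ℚ) / ((n0 : ℚ) - n2 + 1)⌉ with hq
  have hqpos : 0 < q := by
    rw [hq]
    exact Int.ceil_pos.mpr (div_pos (by exact_mod_cast h1) hdq)
  have hqd : n1 ≤ q * d := by
    have h := Int.le_ceil ((n1 : ℚ) / ((n0 : ℚ) - n2 + 1))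
    rw [div_le_iff₀ hdq] at h
    have h' : (n1:ℚ) ≤ (q:ℚ) * ((n0:ℚ) - n2 + 1) := h
    have h'' : (n1:ℚ) ≤ ((q * d : ℤ) : ℚ) := by push_cast [hd]; linarith
    exact_mod_cast h''
  constructor
  · -- lower bound
    have hsum : ∑ k ∈ Finset.range (K1 * K2), (B k + C k)
        ≤ ∑ k ∈ Finset.range (K1 * K2), (A k + 1) := by
      apply Finset.sum_le_sum
      intro k hk
      exact hi k (Finset.mem_range.mp hk)
    rw [Finset.sum_add_distrib, Finset.sum_add_distrib, Finset.sum_const,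
      Finset.card_range, hiii₁, hiii₂, nsmul_eq_mul, mul_one] at hsum
    have hkey : (K2:ℤ) * n1 + (K1:ℤ) * n2 ≤ (K1:ℤ) * n0 + (K1:ℤ) * (K2:ℤ) := by
      push_cast at hsum
      linarith
    have hK1' : (1:ℤ) ≤ K1 := by exact_mod_cast hK1
    have hK2' : (1:ℤ) ≤ K2 := by exact_mod_cast hK2
    have hcast : ((K1*K2 : ℕ):ℤ) = (K1:ℤ) * (K2:ℤ) := by push_cast; ring
    have hbig : n1 ≤ ((K1*K2 : ℕ):ℤ) * d := by
      rw [hcast, hd]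
      nlinarith [mul_nonneg (mul_nonneg (by linarith : (0:ℤ) ≤ (K1:ℤ))
        (by linarith : (0:ℤ) ≤ (K2:ℤ) - 1)) (by omega : (0:ℤ) ≤ n0 - n2),
        mul_nonneg (by linarith : (0:ℤ) ≤ (K2:ℤ) - 1) (by linarith : (0:ℤ) ≤ n1)]
    rw [hq, Int.ceil_le, div_le_iff₀ hdq]
    have : (n1:ℚ) ≤ ((((K1*K2 : ℕ):ℤ) * d : ℤ) : ℚ) := by exact_mod_cast hbig
    push_cast [hd] at this ⊢
    linarith
  · -- construction
    have hqn : ((q.toNat : ℤ)) = q := Int.toNat_of_nonneg hqpos.le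
    have hsumB : ∑ k ∈ Finset.range (q.toNat * 1),
        (min n1 (((k:ℤ)+1)*d) - min n1 ((k:ℤ)*d)) = n1 := by
      rw [mul_one]
      have hts := Finset.sum_range_sub (f := fun k : ℕ => min n1 ((k:ℤ)*d)) q.toNat
      have hcongr : ∑ k ∈ Finset.range q.toNat,
          (min n1 (((k:ℤ)+1)*d) - min n1 ((k:ℤ)*d))
          = ∑ k ∈ Finset.range q.toNat,
          ((fun k : ℕ => min n1 ((k:ℤ)*d)) (k+1) - (fun k : ℕ => min n1 ((k:ℤ)*d)) k) := by
        apply Finset.sum_congr rfl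
        intro k _
        push_cast
        ring_nf
      rw [hcongr, hts]
      simp only [Nat.cast_zero, zero_mul, hqn]
      have h1' : min n1 (q * d) = n1 := min_eq_left hqd
      have h2' : min n1 (0:ℤ) = 0 := min_eq_right (by omega)
      omega
    refine ⟨q.toNat,
      (fun k => min n1 (((k:ℤ)+1)*d) - min n1 ((k:ℤ)*d) + n2 - 1),
      (fun k => min n1 (((k:ℤ)+1)*d) - min n1 ((k:ℤ)*d)),
      (fun _ => n2), hqn.trans hq, ?_, ?_, ?_, ?_, ?_⟩
    · intro k _
      dsimp only
      have ha : 0 ≤ (k:ℤ)*d := mul_nonneg (by positivity) hdpos.le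
      have hb : ((k:ℤ)+1)*d = (k:ℤ)*d + d := by ring
      rw [hb]
      omega
    · intro k _
      dsimp only
      omega
    · -- sum A'
      have e : ∀ k:ℕ, min n1 (((k:ℤ)+1)*d) - min n1 ((k:ℤ)*d) + n2 - 1
          = (min n1 (((k:ℤ)+1)*d) - min n1 ((k:ℤ)*d)) + (n2-1) := fun k => by ring
      rw [Finset.sum_congr rfl fun k _ => e k, Finset.sum_add_distrib, hsumB,
        Finset.sum_const, Finset.card_range, nsmul_eq_mul]
      push_cast [hqn]
      have : n1 ≤ q * (n0 - n2 + 1) := by rw [← hd]; exact hqd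
      nlinarith [this]
    · rw [hsumB]; ring
    · rw [Finset.sum_const, Finset.card_range, nsmul_eq_mul]
      push_cast [hqn]
      ring
end

section
/- For every $m \ge 0$, the primitive $2^{m+2}$-th root of unity $\zeta_{2^{m+2}} = e^{-i\pi/2^{m+1}}$ is not a relative norm of the extension $\mathbb{K}/\mathbb{F}$, where $\mathbb{F} = \mathbb{Q}(\zeta_{2^{m+2}})$ and $\mathbb{K} = \mathbb{F}(\sqrt{5})$: there is no $x \in \mathbb{K}$ with $N_{\mathbb{K}/\mathbb{F}}(x) = \zeta_{2^{m+2}}$. -/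
open IntermediateField

/-- The root of unity `ζ_{2^{m+2}} = e^{-iπ/2^{m+1}}`. -/
noncomputable def zeta2m (m : ℕ) : ℂ :=
  Complex.exp (-((Real.pi : ℂ) * Complex.I) / 2 ^ (m + 1))

/-! Write `ζ = y² - 5 z²` with `y, z ∈ ℚ(ζ) = ℚ[X] ⧸ Φ`, `Φ` the `2^(m+2)`-th cyclotomic polynomial.
Clearing denominators gives `A² - 5 B² ≡ d² X (mod Φ)` in `ℤ[X]`. Since `5 ∤ 2^(m+2)`, `Φ` is
squarefree modulo `5`, so a factor `5` of `d` forces one in `A`, then in `B`: dividing out, we may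
take `5 ∤ d`. Reducing modulo `5` along `X ↦ ω`, a primitive `2^(m+2)`-th root of unity in
`𝔽_{5^(2^m)}`, makes `ω` a square; but `5^(2^m) - 1 = 2^(m+2) · odd`, so `ω` is not a square. -/

open Polynomial

theorem exists_odd_pow_two_pow_eq {j v : ℕ} (hv : Odd v) (k : ℕ) :
    ∃ u, Odd u ∧ (2 ^ (j + 2) * v + 1) ^ 2 ^ k = 2 ^ (j + k + 2) * u + 1 := by
  induction k with
  | zero => exact ⟨v, hv, by simp⟩
  | succ k ih =>
    obtain ⟨u, hu, h⟩ := ih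
    refine ⟨u + 2 ^ (j + k + 1) * u ^ 2, hu.add_even (by simp [Nat.even_pow, parity_simps]), ?_⟩
    rw [pow_succ 2 k, pow_mul, h]
    ring

theorem FiniteField.exists_isPrimitiveRoot_of_dvd {K : Type*} [Field K] [Fintype K] {n : ℕ}
    (hn : n ∣ Fintype.card K - 1) : ∃ ω : K, IsPrimitiveRoot ω n := by
  classical
  obtain ⟨g, hg⟩ := IsCyclic.exists_generator (α := Kˣ)
  have hg' : IsPrimitiveRoot (g : K) (Fintype.card K - 1) := by
    rw [IsPrimitiveRoot.coe_units_iff, ← Fintype.card_units, ← Nat.card_eq_fintype_card,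
      ← orderOf_eq_card_of_forall_mem_zpowers hg]
    exact IsPrimitiveRoot.orderOf g
  obtain ⟨u, hu⟩ := hn
  exact ⟨g ^ u, hg'.pow (by have := Fintype.one_lt_card (α := K); omega) (by rw [hu, mul_comm])⟩

theorem IsPrimitiveRoot.not_isSquare {K : Type*} [Field K] [Fintype K] {ω : K} {k u : ℕ}
    (hω : IsPrimitiveRoot ω (2 ^ (k + 1))) (hu : Odd u)
    (hK : Fintype.card K = 2 ^ (k + 1) * u + 1) : ¬ IsSquare ω := by
  rintro ⟨s, rfl⟩
  have hs : s ≠ 0 := by rintro rfl; exact hω.ne_zero (by positivity) (mul_zero 0)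
  have h1 : (s * s) ^ (2 ^ k * u) = 1 := by
    rw [← FiniteField.pow_card_sub_one_eq_one s hs, hK, Nat.add_sub_cancel]
    ring
  have h2 : 2 ^ k * 2 ∣ 2 ^ k * u := by simpa [pow_succ] using hω.dvd_of_pow_eq_one _ h1
  exact (Nat.not_even_iff_odd.mpr hu) (even_iff_two_dvd.mpr
    (Nat.dvd_of_mul_dvd_mul_left (by positivity) h2))

theorem GaloisField.exists_isPrimitiveRoot_not_isSquare {p j v : ℕ} [Fact p.Prime] (hv : Odd v)
    (hp : p = 2 ^ (j + 2) * v + 1) (m : ℕ) :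
    ∃ ω : GaloisField p (2 ^ m), IsPrimitiveRoot ω (2 ^ (j + m + 2)) ∧ ¬ IsSquare ω := by
  obtain ⟨u, hu, hcard⟩ := exists_odd_pow_two_pow_eq hv m
  let := Fintype.ofFinite (GaloisField p (2 ^ m))
  have hK : Fintype.card (GaloisField p (2 ^ m)) = 2 ^ (j + m + 2) * u + 1 := by
    rw [← Nat.card_eq_fintype_card, GaloisField.card p _ (by positivity), hp, hcard]
  obtain ⟨ω, hω⟩ := FiniteField.exists_isPrimitiveRoot_of_dvd (K := GaloisField p (2 ^ m))
    (n := 2 ^ (j + m + 2)) ⟨u, by rw [hK, Nat.add_sub_cancel]⟩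
  exact ⟨ω, hω, hω.not_isSquare (k := j + m + 1) hu hK⟩

theorem Polynomial.IsPrimitive.dvd_of_dvd_C_mul {M f : ℤ[X]} (hM : M.IsPrimitive) {r : ℤ}
    (hr : r ≠ 0) (h : M ∣ C r * f) : M ∣ f := by
  rw [IsPrimitive.Int.dvd_iff_map_cast_dvd_map_cast _ _ hM] at h ⊢
  rw [Polynomial.map_mul, Polynomial.map_C] at h
  exact (IsUnit.dvd_mul_left (isUnit_C.mpr (by simpa using hr))).mp h

/-- Since `ℤ[X] ⧸ (p, M)` is reduced, `M ∣ A² + p s` forces `A ≡ p A' (mod M)`. -/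
theorem exists_dvd_C_mul_sq_add_of_dvd_sq_add_C_mul {p : ℕ} [Fact p.Prime] {M : ℤ[X]}
    (hM : M.IsPrimitive) (hMp : Squarefree (M.map (Int.castRingHom (ZMod p))))
    {A s : ℤ[X]} (h : M ∣ A ^ 2 + C (p : ℤ) * s) : ∃ A' : ℤ[X], M ∣ C (p : ℤ) * A' ^ 2 + s := by
  set π := Int.castRingHom (ZMod p)
  have hsq : M.map π ∣ A.map π ^ 2 := by
    simpa [Polynomial.map_add, Polynomial.map_mul, π] using Polynomial.map_dvd π h
  obtain ⟨w, hw⟩ := hMp.isRadical 2 _ hsq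
  obtain ⟨W, rfl⟩ := Polynomial.map_surjective π ZMod.intCast_surjective w
  obtain ⟨A', hA'⟩ : C (p : ℤ) ∣ A - M * W := by
    rw [C_dvd_iff_dvd_coeff]
    intro i
    have : (A - M * W).map π = 0 := by rw [Polynomial.map_sub, Polynomial.map_mul, hw, sub_self]
    simpa only [coeff_map, coeff_zero, π, eq_intCast, ZMod.intCast_zmod_eq_zero_iff_dvd] using
      congrArg (coeff · i) this
  refine ⟨A', hM.dvd_of_dvd_C_mul (r := p) (by exact_mod_cast (Fact.out : p.Prime).ne_zero) ?_⟩
  have key : C (p : ℤ) * (C (p : ℤ) * A' ^ 2 + s) =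
      A ^ 2 + C (p : ℤ) * s - M * (M * W ^ 2 + 2 * W * C (p : ℤ) * A') := by
    rw [show A = M * W + C (p : ℤ) * A' by linear_combination hA']; ring
  rw [key]
  exact dvd_sub h (dvd_mul_right _ _)

theorem Polynomial.squarefree_map_cyclotomic_int {p n : ℕ} [Fact p.Prime] (hpn : ¬ p ∣ n) :
    Squarefree ((cyclotomic n ℤ).map (Int.castRingHom (ZMod p))) := by
  have : NeZero (n : ZMod p) := ⟨by rwa [Ne, ZMod.natCast_eq_zero_iff]⟩
  rw [map_cyclotomic]
  exact squarefree_cyclotomic n _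

theorem IsPrimitiveRoot.aeval_cyclotomic_int {K : Type*} [CommRing K] [IsDomain K] {ω : K}
    {n : ℕ} (hω : IsPrimitiveRoot ω n) (hn : 0 < n) : aeval ω (cyclotomic n ℤ) = 0 := by
  rw [aeval_def, eval₂_eq_eval_map, map_cyclotomic]
  exact hω.isRoot_cyclotomic hn

/-- For `M` the minimal polynomial of `α`, reading `X` as `α`, this says that `g(α)` is a norm
from `ℤ[α][√c]` to `ℤ[α]`. -/
def IsNormMod (M : ℤ[X]) (c : ℤ) (g : ℤ[X]) : Prop :=
  ∃ A B : ℤ[X], M ∣ A ^ 2 - C c * B ^ 2 - g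

namespace IsNormMod

variable {M : ℤ[X]} {g : ℤ[X]}

theorem of_C_sq_mul {p : ℕ} [Fact p.Prime] (hM : M.IsPrimitive)
    (hMp : Squarefree (M.map (Int.castRingHom (ZMod p))))
    (h : IsNormMod M p (C ((p : ℤ) ^ 2) * g)) : IsNormMod M p g := by
  obtain ⟨A, B, hAB⟩ := h
  have hA : M ∣ A ^ 2 + C (p : ℤ) * (-B ^ 2 - C (p : ℤ) * g) := by
    convert hAB using 1; rw [C_pow]; ring
  obtain ⟨A', hA'⟩ := exists_dvd_C_mul_sq_add_of_dvd_sq_add_C_mul hM hMp hA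
  have hB : M ∣ B ^ 2 + C (p : ℤ) * (-A' ^ 2 + g) := by
    convert dvd_neg.mpr hA' using 1; ring
  obtain ⟨B', hB'⟩ := exists_dvd_C_mul_sq_add_of_dvd_sq_add_C_mul hM hMp hB
  exact ⟨A', B', by convert dvd_neg.mpr hB' using 1; ring⟩

theorem of_C_pow_sq_mul {p : ℕ} [Fact p.Prime] (hM : M.IsPrimitive)
    (hMp : Squarefree (M.map (Int.castRingHom (ZMod p)))) (k : ℕ)
    (h : IsNormMod M p (C (((p : ℤ) ^ k) ^ 2) * g)) : IsNormMod M p g := by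
  induction k with
  | zero => simpa using h
  | succ k ih =>
    refine ih (of_C_sq_mul hM hMp ?_)
    rwa [← mul_assoc, ← C_mul, ← mul_pow, ← pow_succ']

theorem isSquare_aeval {c : ℤ} {K : Type*} [CommRing K] {ω : K} (h : IsNormMod M c g)
    (hω : aeval ω M = 0) (hc : (c : K) = 0) : IsSquare (aeval ω g) := by
  obtain ⟨A, B, Q, hQ⟩ := h
  refine ⟨aeval ω A, ?_⟩
  have := congrArg (aeval ω) hQ
  simp only [map_sub, map_mul, map_pow, aeval_C, algebraMap_int_eq, Int.coe_castRingHom, hc,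
    hω] at this
  linear_combination -this

theorem exists_not_dvd {p : ℕ} [Fact p.Prime] (hM : M.IsPrimitive)
    (hMp : Squarefree (M.map (Int.castRingHom (ZMod p)))) {d : ℤ} (hd : d ≠ 0)
    (h : IsNormMod M p (C (d ^ 2) * g)) :
    ∃ e : ℕ, ¬ p ∣ e ∧ IsNormMod M p (C ((e : ℤ) ^ 2) * g) := by
  obtain ⟨k, e, he, hde⟩ :=
    Nat.exists_eq_pow_mul_and_not_dvd (Int.natAbs_ne_zero.mpr hd) p (Fact.out : p.Prime).ne_one
  have hd2 : d ^ 2 = ((p : ℤ) ^ k * e) ^ 2 := by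
    rw [← Int.natAbs_sq d, hde]
    push_cast
    ring
  refine ⟨e, he, of_C_pow_sq_mul hM hMp k ?_⟩
  rwa [← mul_assoc, ← C_mul, ← mul_pow, ← hd2]

end IsNormMod

theorem exists_zsmul_eq_aeval_of_mem_adjoin_simple {L : Type*} [Field L] [Algebra ℚ L] {α : L}
    (hα : IsIntegral ℚ α) {y : L} (hy : y ∈ ℚ⟮α⟯) :
    ∃ d : ℤ, d ≠ 0 ∧ ∃ A : ℤ[X], aeval α A = d • y := by
  rw [← mem_toSubalgebra, adjoin_simple_toSubalgebra_of_isAlgebraic hα.isAlgebraic,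
    Algebra.adjoin_singleton_eq_range_aeval] at hy
  obtain ⟨P, rfl⟩ := hy
  obtain ⟨d, hd, hP⟩ := IsLocalization.integerNormalization_spec (nonZeroDivisors ℤ) P
  refine ⟨d, nonZeroDivisors.ne_zero hd,
    IsLocalization.integerNormalization (nonZeroDivisors ℤ) P, ?_⟩
  rw [← aeval_map_algebraMap ℚ, hP, map_zsmul]
  rfl

theorem exists_isNormMod_minpoly {L : Type*} [Field L] [CharZero L] {α : L} (hα : IsIntegral ℤ α)
    {c : ℤ} {y z : L} (hy : y ∈ ℚ⟮α⟯) (hz : z ∈ ℚ⟮α⟯) (h : y ^ 2 - c * z ^ 2 = α) :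
    ∃ d : ℤ, d ≠ 0 ∧ IsNormMod (minpoly ℤ α) c (C (d ^ 2) * X) := by
  obtain ⟨d₁, hd₁, A, hA⟩ := exists_zsmul_eq_aeval_of_mem_adjoin_simple hα.tower_top hy
  obtain ⟨d₂, hd₂, B, hB⟩ := exists_zsmul_eq_aeval_of_mem_adjoin_simple hα.tower_top hz
  refine ⟨d₁ * d₂, mul_ne_zero hd₁ hd₂, C d₂ * A, C d₁ * B, minpoly.isIntegrallyClosed_dvd hα ?_⟩
  simp only [map_sub, map_mul, map_pow, aeval_C, aeval_X, hA, hB, algebraMap_int_eq,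
    Int.coe_castRingHom, zsmul_eq_mul]
  linear_combination (d₁ * d₂ : L) ^ 2 * h

theorem zeta2m_isPrimitiveRoot (m : ℕ) : IsPrimitiveRoot (zeta2m m) (2 ^ (m + 2)) := by
  have hζ : zeta2m m = (Complex.exp (2 * Real.pi * Complex.I / (2 ^ (m + 2) : ℕ)))⁻¹ := by
    rw [← Complex.exp_neg, zeta2m]
    congr 1
    push_cast
    field_simp
    ring
  rw [hζ]
  exact (Complex.isPrimitiveRoot_exp _ (by positivity)).inv

/-- `ζ_{2^{m+2}}` is not a relative norm of `𝕂/𝔽` with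
`𝔽 = ℚ(ζ_{2^{m+2}})` and `𝕂 = 𝔽(√5)`: there is no `x = y + z√5 ∈ 𝕂` (with
`y, z ∈ 𝔽`) whose norm `y² - 5z²` equals `ζ_{2^{m+2}}`. -/
theorem zeta_not_norm (m : ℕ) :
    ¬ ∃ y z : ℂ, y ∈ ℚ⟮zeta2m m⟯ ∧ z ∈ ℚ⟮zeta2m m⟯ ∧
      y ^ 2 - 5 * z ^ 2 = zeta2m m := by
  rintro ⟨y, z, hy, hz, hyz⟩
  have := Fact.mk Nat.prime_five
  have hζ := zeta2m_isPrimitiveRoot m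
  obtain ⟨d, hd, hnorm⟩ := exists_isNormMod_minpoly (c := (5 : ℕ)) (hζ.isIntegral (by positivity))
    hy hz (by exact_mod_cast hyz)
  rw [← cyclotomic_eq_minpoly hζ (by positivity)] at hnorm
  have h5 : ¬ 5 ∣ 2 ^ (m + 2) := fun h ↦ by
    have := Nat.prime_five.dvd_of_dvd_pow h
    norm_num at this
  obtain ⟨e, he, hnorm⟩ :=
    hnorm.exists_not_dvd (cyclotomic.isPrimitive _ ℤ) (squarefree_map_cyclotomic_int h5) hd
  obtain ⟨ω, hω, hω_sq⟩ :=
    GaloisField.exists_isPrimitiveRoot_not_isSquare (p := 5) (j := 0) odd_one rfl m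
  rw [zero_add] at hω
  have hsq := hnorm.isSquare_aeval (hω.aeval_cyclotomic_int (by positivity))
    (by exact_mod_cast CharP.cast_eq_zero _ 5)
  rw [aeval_mul, aeval_C, aeval_X, map_pow, map_natCast] at hsq
  have he' : (e : GaloisField 5 (2 ^ m)) ≠ 0 := by rwa [Ne, CharP.cast_eq_zero_iff _ 5]
  exact hω_sq (by simpa [he'] using hsq.div (IsSquare.sq (e : GaloisField 5 (2 ^ m))))
end

section
/- Let $\theta = \frac{1+\sqrt{5}}{2}$, $\bar\theta = \frac{1-\sqrt{5}}{2}$, $\alpha = 1 + i - i\theta$, $\bar\alpha = 1 + i - i\bar\theta$, and $\gamma \in \mathbb{Z}[i]$ with $|\gamma| = 1$. For $a, b, c, d \in \mathbb{Z}[i]$, define $\Xi = \begin{pmatrix} \alpha(a + b\theta) & \alpha(c + d\theta) \\ \gamma\bar\alpha(c + d\bar\theta) & \bar\alpha(a + b\bar\theta) \end{pmatrix}$. Then $\det \Xi \in \mathbb{Z}[i]$, and if $\gamma$ is not a norm of the extension $\mathbb{Q}(i,\sqrt{5})/\mathbb{Q}(i)$, then $\det\Xi = 0$ implies $a = b = c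 = d = 0$; consequently for $(a,b,c,d) \ne 0$, $|\det\Xi| \ge 1$. -/
/-- `z` is a Gaussian integer (an element of `ℤ[i]`). -/
def IsGaussInt (z : ℂ) : Prop := ∃ p q : ℤ, z = (p : ℂ) + (q : ℂ) * Complex.I

/-- `z` is a Gaussian rational (an element of `ℚ(i)`). -/
def IsGaussRat (z : ℂ) : Prop := ∃ p q : ℚ, z = (p : ℂ) + (q : ℂ) * Complex.I

/-!
Writing `N(u + vθ) = (u + vθ)(u + vθ̄) = u² + uv - v²`, one has
`det Ξ = N(α) (N(a + bθ) - γ N(c + dθ))` with `N(α) = 2 + i`, so `det Ξ ∈ ℤ[i]`.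
If `det Ξ = 0` and `N(c + dθ) ≠ 0`, then `γ` is the norm of `(a + bθ)/(c + dθ)`. Otherwise both
norms vanish, and since `5` is not a square in `ℚ(i)` the form `u² + uv - v²` is anisotropic
over `ℚ(i)`, forcing `a = b = c = d = 0`. Nonzero Gaussian integers have modulus at least `1`.
-/

open Complex

lemma isGaussInt_iff_mem_range {z : ℂ} : IsGaussInt z ↔ z ∈ GaussianInt.toComplex.range := by
  constructor
  · rintro ⟨p, q, rfl⟩
    exact ⟨⟨p, q⟩, GaussianInt.toComplex_def' p q⟩
  · rintro ⟨x, rfl⟩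
    exact ⟨x.re, x.im, GaussianInt.toComplex_def x⟩

lemma one_le_norm_of_isGaussInt {z : ℂ} (hz : IsGaussInt z) (h0 : z ≠ 0) : 1 ≤ ‖z‖ := by
  obtain ⟨x, rfl⟩ := isGaussInt_iff_mem_range.mp hz
  have hx : (1 : ℝ) ≤ x.norm := by
    exact_mod_cast GaussianInt.norm_pos.mpr (fun h => h0 (by simp [h]))
  have hsq : (1 : ℝ) ≤ ‖(x : ℂ)‖ ^ 2 := by
    rwa [← Complex.normSq_eq_norm_sq, ← GaussianInt.intCast_real_norm]
  nlinarith [norm_nonneg (x : ℂ)]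

lemma inv_ratCast_add_ratCast_mul_I (p q : ℚ) :
    ((p : ℂ) + q * I)⁻¹ = ((p / (p ^ 2 + q ^ 2) : ℚ) : ℂ) + ((-q / (p ^ 2 + q ^ 2) : ℚ) : ℂ) * I := by
  apply Complex.ext <;>
    simp [Complex.inv_re, Complex.inv_im, Complex.normSq_apply, -Rat.cast_div, -Rat.cast_neg] <;>
    push_cast <;> ring

def gaussRat : Subfield ℂ where
  carrier := {z | IsGaussRat z}
  zero_mem' := ⟨0, 0, by simp⟩
  one_mem' := ⟨1, 0, by simp⟩
  add_mem' := by
    rintro _ _ ⟨p, q, rfl⟩ ⟨r, s, rfl⟩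
    exact ⟨p + r, q + s, by push_cast; ring⟩
  neg_mem' := by
    rintro _ ⟨p, q, rfl⟩
    exact ⟨-p, -q, by push_cast; ring⟩
  mul_mem' := by
    rintro _ _ ⟨p, q, rfl⟩ ⟨r, s, rfl⟩
    exact ⟨p * r - q * s, p * s + q * r, by push_cast; linear_combination (q * s : ℂ) * I_sq⟩
  inv_mem' := by
    rintro _ ⟨p, q, rfl⟩
    exact ⟨_, _, inv_ratCast_add_ratCast_mul_I p q⟩

lemma IsGaussInt.mem_gaussRat {z : ℂ} (hz : IsGaussInt z) : z ∈ gaussRat := by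
  obtain ⟨p, q, rfl⟩ := hz
  exact ⟨p, q, by push_cast; rfl⟩

lemma sq_ne_five_of_mem_gaussRat {z : ℂ} (hz : z ∈ gaussRat) : z ^ 2 ≠ 5 := by
  obtain ⟨p, q, rfl⟩ := hz
  intro h
  simp only [Complex.ext_iff, sq, mul_re, mul_im, add_re, add_im, ratCast_re, ratCast_im, I_re,
    I_im, re_ofNat, im_ofNat] at h
  have hre : p ^ 2 - q ^ 2 = 5 := by
    exact_mod_cast (by linear_combination h.1 : (p : ℝ) ^ 2 - q ^ 2 = 5)
  have him : p * q = 0 := by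
    exact_mod_cast (by linear_combination h.2 / 2 : (p : ℝ) * q = 0)
  rcases mul_eq_zero.mp him with rfl | rfl
  · nlinarith
  · have h5 : IsSquare ((5 : ℕ) : ℚ) := ⟨p, by push_cast; linear_combination -hre⟩
    rw [Rat.isSquare_natCast_iff] at h5
    obtain ⟨r, hr⟩ := h5
    have : r ≤ 2 := by nlinarith
    interval_cases r <;> omega

lemma eq_zero_of_sq_add_mul_sub_sq_eq_zero {u v : ℂ} (hu : u ∈ gaussRat) (hv : v ∈ gaussRat)
    (h : u ^ 2 + u * v - v ^ 2 = 0) : u = 0 ∧ v = 0 := by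
  by_cases hv0 : v = 0
  · subst hv0
    exact ⟨pow_eq_zero_iff two_ne_zero |>.mp (by simpa using h), rfl⟩
  -- `(2u + v)² = 4(u² + uv - v²) + 5v²`
  · refine absurd ?_ (sq_ne_five_of_mem_gaussRat (z := (2 * u + v) / v) ?_)
    · field_simp
      linear_combination 4 * h
    · exact div_mem (add_mem (mul_mem (ofNat_mem gaussRat 2) hu) hv) hv

/-- `γ` is a norm from `ℚ(i, √5)` to `ℚ(i)`, where `N(x + y√5) = x² - 5y²`. -/
def IsNormSqrtFive (γ : ℂ) : Prop :=
  ∃ x y : ℂ, x ∈ gaussRat ∧ y ∈ gaussRat ∧ x ^ 2 - 5 * y ^ 2 = γ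

lemma IsNormSqrtFive.mul {γ δ : ℂ} (hγ : IsNormSqrtFive γ) (hδ : IsNormSqrtFive δ) :
    IsNormSqrtFive (γ * δ) := by
  obtain ⟨x, y, hx, hy, rfl⟩ := hγ
  obtain ⟨z, w, hz, hw, rfl⟩ := hδ
  refine ⟨x * z + 5 * y * w, x * w + y * z, ?_, ?_, by ring⟩
  · exact add_mem (mul_mem hx hz) (mul_mem (mul_mem (ofNat_mem gaussRat 5) hy) hw)
  · exact add_mem (mul_mem hx hw) (mul_mem hy hz)

lemma IsNormSqrtFive.inv {γ : ℂ} (hγ : IsNormSqrtFive γ) : IsNormSqrtFive γ⁻¹ := by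
  obtain ⟨x, y, hx, hy, rfl⟩ := hγ
  set γ := x ^ 2 - 5 * y ^ 2
  have hγ : γ ∈ gaussRat := sub_mem (pow_mem hx 2) (mul_mem (ofNat_mem gaussRat 5) (pow_mem hy 2))
  refine ⟨x / γ, y / γ, div_mem hx hγ, div_mem hy hγ, ?_⟩
  rw [div_pow, div_pow, ← mul_div_assoc, div_sub_div_same, sq γ, div_self_mul_self']

lemma IsNormSqrtFive.sq_add_mul_sub_sq {u v : ℂ} (hu : u ∈ gaussRat) (hv : v ∈ gaussRat) :
    IsNormSqrtFive (u ^ 2 + u * v - v ^ 2) := by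
  have hv2 : v / 2 ∈ gaussRat := div_mem hv (ofNat_mem gaussRat 2)
  exact ⟨u + v / 2, v / 2, add_mem hu hv2, hv2, by ring⟩

lemma eq_zero_of_sq_add_mul_sub_sq_eq_mul {a b c d γ : ℂ} (ha : a ∈ gaussRat) (hb : b ∈ gaussRat)
    (hc : c ∈ gaussRat) (hd : d ∈ gaussRat) (hγ : ¬ IsNormSqrtFive γ)
    (h : a ^ 2 + a * b - b ^ 2 = γ * (c ^ 2 + c * d - d ^ 2)) :
    a = 0 ∧ b = 0 ∧ c = 0 ∧ d = 0 := by
  have hcd : c ^ 2 + c * d - d ^ 2 = 0 := by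
    by_contra hcd
    refine hγ ?_
    rw [eq_div_of_mul_eq hcd h.symm, div_eq_mul_inv]
    exact (IsNormSqrtFive.sq_add_mul_sub_sq ha hb).mul (IsNormSqrtFive.sq_add_mul_sub_sq hc hd).inv
  have hab : a ^ 2 + a * b - b ^ 2 = 0 := by rw [h, hcd, mul_zero]
  obtain ⟨rfl, rfl⟩ := eq_zero_of_sq_add_mul_sub_sq_eq_zero ha hb hab
  obtain ⟨rfl, rfl⟩ := eq_zero_of_sq_add_mul_sub_sq_eq_zero hc hd hcd
  exact ⟨rfl, rfl, rfl, rfl⟩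

lemma add_mul_mul_add_mul_conj {θ θbar : ℂ} (hsum : θ + θbar = 1) (hprod : θ * θbar = -1)
    (u v : ℂ) : (u + v * θ) * (u + v * θbar) = u ^ 2 + u * v - v ^ 2 := by
  linear_combination u * v * hsum + v ^ 2 * hprod

lemma one_add_I_sub_I_mul_mul_conj {θ θbar : ℂ} (hsum : θ + θbar = 1) (hprod : θ * θbar = -1) :
    (1 + I - I * θ) * (1 + I - I * θbar) = 2 + I := by
  linear_combination (-(I + I ^ 2)) * hsum + I ^ 2 * hprod - I_sq

lemma det_goldenCode {θ θbar : ℂ} (hsum : θ + θbar = 1) (hprod : θ * θbar = -1)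
    (a b c d γ α αbar : ℂ) :
    (!![α * (a + b * θ), α * (c + d * θ); γ * αbar * (c + d * θbar), αbar * (a + b * θbar)]).det
      = α * αbar * ((a ^ 2 + a * b - b ^ 2) - γ * (c ^ 2 + c * d - d ^ 2)) := by
  rw [Matrix.det_fin_two_of]
  linear_combination α * αbar * (add_mul_mul_add_mul_conj hsum hprod a b
    - γ * add_mul_mul_add_mul_conj hsum hprod c d)

lemma isGaussInt_two_add_I_mul {a b c d γ : ℂ} (ha : IsGaussInt a) (hb : IsGaussInt b)
    (hc : IsGaussInt c) (hd : IsGaussInt d) (hγ : IsGaussInt γ) :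
    IsGaussInt ((2 + I) * ((a ^ 2 + a * b - b ^ 2) - γ * (c ^ 2 + c * d - d ^ 2))) := by
  obtain ⟨a, rfl⟩ := isGaussInt_iff_mem_range.mp ha
  obtain ⟨b, rfl⟩ := isGaussInt_iff_mem_range.mp hb
  obtain ⟨c, rfl⟩ := isGaussInt_iff_mem_range.mp hc
  obtain ⟨d, rfl⟩ := isGaussInt_iff_mem_range.mp hd
  obtain ⟨γ, rfl⟩ := isGaussInt_iff_mem_range.mp hγ
  refine isGaussInt_iff_mem_range.mpr
    ⟨⟨2, 1⟩ * ((a ^ 2 + a * b - b ^ 2) - γ * (c ^ 2 + c * d - d ^ 2)), ?_⟩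
  simp [GaussianInt.toComplex_def']

open Complex in
theorem golden_code_nvd_general (a b c d γ : ℂ)
    (ha : IsGaussInt a) (hb : IsGaussInt b) (hc : IsGaussInt c) (hd : IsGaussInt d)
    (hγ : IsGaussInt γ)
    (θ θbar α αbar : ℂ)
    (hθ : θ = (1 + Real.sqrt 5) / 2) (hθbar : θbar = (1 - Real.sqrt 5) / 2)
    (hα : α = 1 + I - I * θ) (hαbar : αbar = 1 + I - I * θbar)
    (Ξ : Matrix (Fin 2) (Fin 2) ℂ)
    (hΞ : Ξ = !![α * (a + b * θ), α * (c + d * θ);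
                 γ * αbar * (c + d * θbar), αbar * (a + b * θbar)]) :
    IsGaussInt Ξ.det
    ∧ ((¬ ∃ x y : ℂ, IsGaussRat x ∧ IsGaussRat y ∧ x ^ 2 - 5 * y ^ 2 = γ) →
        ((Ξ.det = 0 → a = 0 ∧ b = 0 ∧ c = 0 ∧ d = 0)
          ∧ (¬ (a = 0 ∧ b = 0 ∧ c = 0 ∧ d = 0) → 1 ≤ ‖Ξ.det‖))) := by
  have hsum : θ + θbar = 1 := by
    rw [hθ, hθbar]; exact_mod_cast Real.goldenRatio_add_goldenConj
  have hprod : θ * θbar = -1 := by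
    rw [hθ, hθbar]; exact_mod_cast Real.goldenRatio_mul_goldenConj
  have hdet : Ξ.det = (2 + I) * ((a ^ 2 + a * b - b ^ 2) - γ * (c ^ 2 + c * d - d ^ 2)) := by
    rw [hΞ, det_goldenCode hsum hprod, hα, hαbar, one_add_I_sub_I_mul_mul_conj hsum hprod]
  have hint : IsGaussInt Ξ.det := hdet ▸ isGaussInt_two_add_I_mul ha hb hc hd hγ
  refine ⟨hint, fun hnorm => ?_⟩
  have hzero : Ξ.det = 0 → a = 0 ∧ b = 0 ∧ c = 0 ∧ d = 0 := fun h0 => by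
    have h2I : (2 + I : ℂ) ≠ 0 := fun h => by simpa using congrArg re h
    rw [hdet, mul_eq_zero, or_iff_right h2I, sub_eq_zero] at h0
    exact eq_zero_of_sq_add_mul_sub_sq_eq_mul ha.mem_gaussRat hb.mem_gaussRat hc.mem_gaussRat
      hd.mem_gaussRat hnorm h0
  exact ⟨hzero, fun hne => one_le_norm_of_isGaussInt hint (mt hzero hne)⟩

open Complex in
/-- Non-vanishing determinant of the Golden-code-type codeword matrix:
with `θ = (1+√5)/2`, `α = 1 + i - iθ`, `γ ∈ ℤ[i]`, `|γ| = 1`, and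
`Ξ = [[α(a+bθ), α(c+dθ)], [γᾱ(c+dθ̄), ᾱ(a+bθ̄)]]` for `a,b,c,d ∈ ℤ[i]`,
one has `det Ξ ∈ ℤ[i]`; and if `γ` is not a norm of `ℚ(i,√5)/ℚ(i)`, then
`det Ξ = 0` forces `a = b = c = d = 0`, so that `|det Ξ| ≥ 1` whenever
`(a,b,c,d) ≠ 0`. -/
theorem golden_code_nvd (a b c d γ : ℂ)
    (ha : IsGaussInt a) (hb : IsGaussInt b) (hc : IsGaussInt c) (hd : IsGaussInt d)
    (hγ : IsGaussInt γ) (hγ1 : ‖γ‖ = 1)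
    (θ θbar α αbar : ℂ)
    (hθ : θ = (1 + Real.sqrt 5) / 2) (hθbar : θbar = (1 - Real.sqrt 5) / 2)
    (hα : α = 1 + I - I * θ) (hαbar : αbar = 1 + I - I * θbar)
    (Ξ : Matrix (Fin 2) (Fin 2) ℂ)
    (hΞ : Ξ = !![α * (a + b * θ), α * (c + d * θ);
                 γ * αbar * (c + d * θbar), αbar * (a + b * θbar)]) :
    IsGaussInt Ξ.det
    ∧ ((¬ ∃ x y : ℂ, IsGaussRat x ∧ IsGaussRat y ∧ x ^ 2 - 5 * y ^ 2 = γ) →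
        ((Ξ.det = 0 → a = 0 ∧ b = 0 ∧ c = 0 ∧ d = 0)
          ∧ (¬ (a = 0 ∧ b = 0 ∧ c = 0 ∧ d = 0) → 1 ≤ ‖Ξ.det‖))) :=
  golden_code_nvd_general a b c d γ ha hb hc hd hγ θ θbar α αbar hθ hθbar hα hαbar Ξ hΞ
end
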